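/- Let $j,k\ge 1$ be integers with $|k-2j|>4$ and let $0\le s\le 1$. Define $F_{j,k}(\tau,\xi) = \frac{(2^{-k}+2^{2j-k}\xi^2)^{s}}{\tau+2^{2j-k}\xi^2}\,\psi(\tau)\phi(\xi)$, where $\psi,\phi\in C_0^{\infty}(\mathbb{R})$ are Littlewood–Paley bump functions supported in $\{1/2\le|\cdot|\le 2\}$ and the support condition $|k-2j|>4$ guarantees $|\tau+2^{2j-k}\xi^2|\ge c>0$ on the support of $\psi(\tau)\phi(\xi)$. Then for all multi-indices $\alpha$ with $|\alpha|\le 3$, $|\partial^{\alpha}_{\tau,\xi}F_{j,k}(\tau,\xi)|\le C$, with $C$ independent of $j$ and $k$; consequently $\|\mathcal{F}^{-1}_{t,x}F_{j,k}\|_{L^1(\mathbb{R}^2)} \le C'$ uniformly in $j,k$. -/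

import Mathlib

open MeasureTheory

/-- The symbol `F_{j,k}(τ,ξ)` viewed as a complex-valued function on `ℝ²`,
with `τ = p 0` and `ξ = p 1`. -/
noncomputable def Fjk (ψ φ : ℝ → ℝ) (s : ℝ) (j k : ℕ)
    (p : EuclideanSpace ℝ (Fin 2)) : ℂ :=
  ((((2:ℝ)^(-(k:ℤ)) + (2:ℝ)^(2*(j:ℤ)-(k:ℤ)) * (p 1)^2) ^ s /
      (p 0 + (2:ℝ)^(2*(j:ℤ)-(k:ℤ)) * (p 1)^2) * ψ (p 0) * φ (p 1) : ℝ) : ℂ)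

namespace Stmt8Aux

open Filter Topology Set

abbrev E2 := EuclideanSpace ℝ (Fin 2)
abbrev Y4 : Type := ℝ × ℝ × ℝ × ℝ

/-- The fixed model function. -/
noncomputable def Wf (s : ℝ) (y : Y4) : ℝ :=
  (y.2.2.1 + y.2.1 ^ 2) ^ s / (y.1 + y.2.2.2 * y.2.1 ^ 2)

/-- The open set where `Wf` is smooth. -/
def Om : Set Y4 := {y | 0 < y.2.2.1 + y.2.1 ^ 2 ∧ y.1 + y.2.2.2 * y.2.1 ^ 2 ≠ 0}

/-- A fixed compact subset of `Om`. -/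
def Sc : Set Y4 := {y | |y.1| ≤ 2 ∧ 1/2 ≤ |y.2.1| ∧ |y.2.1| ≤ 2 ∧ 0 ≤ y.2.2.1 ∧ y.2.2.1 ≤ 1 ∧
    0 ≤ y.2.2.2 ∧ y.2.2.2 ≤ 1 ∧ 3/16 ≤ |y.1 + y.2.2.2 * y.2.1 ^ 2|}

/-- The rectangle containing the support. -/
def Rs : Set E2 := {q | 1/2 ≤ |q 0| ∧ |q 0| ≤ 2 ∧ 1/2 ≤ |q 1| ∧ |q 1| ≤ 2}

lemma cont_y1 : Continuous fun y : Y4 => y.1 := continuous_fst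
lemma cont_y2 : Continuous fun y : Y4 => y.2.1 := continuous_fst.comp continuous_snd
lemma cont_y3 : Continuous fun y : Y4 => y.2.2.1 :=
  continuous_fst.comp (continuous_snd.comp continuous_snd)
lemma cont_y4 : Continuous fun y : Y4 => y.2.2.2 :=
  continuous_snd.comp (continuous_snd.comp continuous_snd)

lemma isOpen_Om : IsOpen Om := by
  rw [Om, Set.setOf_and]
  exact IsOpen.inter (isOpen_lt continuous_const (cont_y3.add (cont_y2.pow 2)))
    (isOpen_ne_fun (cont_y1.add (cont_y4.mul (cont_y2.pow 2))) continuous_const)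

lemma Sc_subset_Om : Sc ⊆ Om := by
  rintro y ⟨h1, h2, h3, h4, h5, h6, h7, h8⟩
  constructor
  · have : (1/2:ℝ)^2 ≤ |y.2.1|^2 := by
      apply pow_le_pow_left₀ (by norm_num) h2
    rw [sq_abs] at this
    nlinarith
  · intro h
    rw [h] at h8
    simp at h8
    linarith

lemma isCompact_Sc : IsCompact Sc := by
  have hclosed : IsClosed Sc := by
    simp only [Sc, Set.setOf_and]
    refine IsClosed.inter (isClosed_le (continuous_abs.comp cont_y1) continuous_const) ?_
    refine IsClosed.inter (isClosed_le continuous_const (continuous_abs.comp cont_y2)) ?_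
    refine IsClosed.inter (isClosed_le (continuous_abs.comp cont_y2) continuous_const) ?_
    refine IsClosed.inter (isClosed_le continuous_const cont_y3) ?_
    refine IsClosed.inter (isClosed_le cont_y3 continuous_const) ?_
    refine IsClosed.inter (isClosed_le continuous_const cont_y4) ?_
    refine IsClosed.inter (isClosed_le cont_y4 continuous_const) ?_
    exact isClosed_le continuous_const
      (continuous_abs.comp (cont_y1.add (cont_y4.mul (cont_y2.pow 2))))
  have hbdd : Sc ⊆ Metric.closedBall 0 2 := by
    rintro y ⟨h1, h2, h3, h4, h5, h6, h7, h8⟩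
    rw [Metric.mem_closedBall, dist_zero_right]
    rw [Prod.norm_def, Prod.norm_def, Prod.norm_def]
    simp only [Real.norm_eq_abs]
    refine max_le h1 (max_le h3 (max_le ?_ ?_)) <;> rw [abs_le] <;> constructor <;> linarith
  exact (isCompact_closedBall (0:Y4) 2).of_isClosed_subset hclosed hbdd

lemma contDiffOn_Wf (s : ℝ) (n : ℕ) : ContDiffOn ℝ n (Wf s) Om := by
  intro y hy
  apply ContDiffWithinAt.mono (s := Set.univ) _ (subset_univ _)
  have h1 : ContDiffAt ℝ n (fun y : Y4 => y.2.2.1 + y.2.1 ^ 2) y := by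
    apply ContDiffAt.add
    · exact (contDiff_fst.comp (contDiff_snd.comp contDiff_snd)).contDiffAt
    · exact ((contDiff_fst.comp contDiff_snd).pow 2).contDiffAt
  have h2 : ContDiffAt ℝ n (fun y : Y4 => y.1 + y.2.2.2 * y.2.1 ^ 2) y := by
    apply ContDiffAt.add contDiff_fst.contDiffAt
    exact ((contDiff_snd.comp (contDiff_snd.comp contDiff_snd)).mul
      ((contDiff_fst.comp contDiff_snd).pow 2)).contDiffAt
  have hnum : ContDiffAt ℝ n (fun y : Y4 => (y.2.2.1 + y.2.1 ^ 2) ^ s) y := by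
    have := (Real.contDiffAt_rpow_const_of_ne (x := y.2.2.1 + y.2.1 ^ 2) (p := s)
      (ne_of_gt hy.1)).comp y h1
    exact this
  exact (hnum.div h2 hy.2).contDiffWithinAt

lemma exists_CW (s : ℝ) : ∃ CW : ℝ, 0 ≤ CW ∧ ∀ i ≤ 3, ∀ y ∈ Sc,
    ‖iteratedFDerivWithin ℝ i (Wf s) Om y‖ ≤ CW := by
  have hb : ∀ i : ℕ, ∃ Ci : ℝ, ∀ y ∈ Sc, ‖iteratedFDerivWithin ℝ i (Wf s) Om y‖ ≤ Ci := by
    intro i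
    have hcont : ContinuousOn (iteratedFDerivWithin ℝ i (Wf s) Om) Om := by
      apply (contDiffOn_Wf s (i+1)).continuousOn_iteratedFDerivWithin _ isOpen_Om.uniqueDiffOn
      exact_mod_cast Nat.le_succ i
    exact isCompact_Sc.exists_bound_of_continuousOn (hcont.mono Sc_subset_Om)
  obtain ⟨C0, h0⟩ := hb 0
  obtain ⟨C1, h1⟩ := hb 1
  obtain ⟨C2, h2⟩ := hb 2
  obtain ⟨C3, h3⟩ := hb 3
  refine ⟨max 0 (max (max C0 C1) (max C2 C3)), le_max_left _ _, ?_⟩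
  intro i hi y hy
  interval_cases i
  · exact (h0 y hy).trans (le_max_of_le_right (le_max_of_le_left (le_max_left _ _)))
  · exact (h1 y hy).trans (le_max_of_le_right (le_max_of_le_left (le_max_right _ _)))
  · exact (h2 y hy).trans (le_max_of_le_right (le_max_of_le_right (le_max_left _ _)))
  · exact (h3 y hy).trans (le_max_of_le_right (le_max_of_le_right (le_max_right _ _)))

lemma abs_coord_le (q : E2) (i : Fin 2) : |q i| ≤ ‖q‖ := by
  have key : ∀ i : Fin 2, |q i|^2 ≤ ∑ j : Fin 2, ‖q j‖^2 := by
    rw [Fin.forall_fin_two, Fin.sum_univ_two]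
    simp only [Real.norm_eq_abs, sq_abs]
    constructor <;> nlinarith [sq_nonneg (q 0), sq_nonneg (q 1)]
  rw [EuclideanSpace.norm_eq q, ← Real.sqrt_sq_eq_abs,
    show (q i)^2 = |q i|^2 from (sq_abs _).symm]
  exact Real.sqrt_le_sqrt (key i)

lemma cont_q0 : Continuous fun q : E2 => q 0 := (EuclideanSpace.proj (0 : Fin 2)).continuous
lemma cont_q1 : Continuous fun q : E2 => q 1 := (EuclideanSpace.proj (1 : Fin 2)).continuous

lemma isClosed_Rs : IsClosed Rs := by
  simp only [Rs, Set.setOf_and]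
  refine IsClosed.inter (isClosed_le continuous_const (continuous_abs.comp cont_q0)) ?_
  refine IsClosed.inter (isClosed_le (continuous_abs.comp cont_q0) continuous_const) ?_
  exact IsClosed.inter (isClosed_le continuous_const (continuous_abs.comp cont_q1))
    (isClosed_le (continuous_abs.comp cont_q1) continuous_const)

lemma Rs_subset_ball : Rs ⊆ Metric.closedBall (0:E2) 3 := by
  rintro q ⟨h1, h2, h3, h4⟩
  rw [Metric.mem_closedBall, dist_zero_right, EuclideanSpace.norm_eq]
  have h9 : Real.sqrt 9 = 3 := by
    rw [show (9:ℝ) = 3^2 by norm_num, Real.sqrt_sq (by norm_num)]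
  rw [← h9]
  apply Real.sqrt_le_sqrt
  rw [Fin.sum_univ_two]
  simp only [Real.norm_eq_abs, sq_abs]
  nlinarith [abs_nonneg (q 0), abs_nonneg (q 1), sq_abs (q 0), sq_abs (q 1)]

lemma Fjk_eq_zero {ψ φ : ℝ → ℝ}
    (hψsupp : ∀ τ : ℝ, ψ τ ≠ 0 → 1/2 ≤ |τ| ∧ |τ| ≤ 2)
    (hφsupp : ∀ ξ : ℝ, φ ξ ≠ 0 → 1/2 ≤ |ξ| ∧ |ξ| ≤ 2)
    (s : ℝ) (j k : ℕ) {q : E2} (hq : q ∉ Rs) : Fjk ψ φ s j k q = 0 := by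
  have : ψ (q 0) * φ (q 1) = 0 := by
    by_contra h
    rcases mul_ne_zero_iff.1 h with ⟨hψ0, hφ0⟩
    exact hq ⟨(hψsupp _ hψ0).1, (hψsupp _ hψ0).2, (hφsupp _ hφ0).1, (hφsupp _ hφ0).2⟩
  simp only [Fjk, mul_assoc, this, mul_zero, Complex.ofReal_zero]

lemma iFD_zero_of_eventually {F : Type*} [NormedAddCommGroup F] [NormedSpace ℝ F]
    {G : Type*} [NormedAddCommGroup G] [NormedSpace ℝ G]
    {f : G → F} {x : G} (h : ∀ᶠ y in 𝓝 x, f y = 0) (n : ℕ) :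
    iteratedFDeriv ℝ n f x = 0 := by
  have h' : f =ᶠ[𝓝[Set.univ] x] (fun _ => (0:F)) := by
    rwa [nhdsWithin_univ]
  have h2 := h'.iteratedFDerivWithin (𝕜 := ℝ) n
  rw [nhdsWithin_univ] at h2
  have h3 := h2.self_of_nhds
  rw [iteratedFDerivWithin_univ, iteratedFDerivWithin_univ] at h3
  rw [h3, iteratedFDeriv_zero_fun]
  rfl

lemma exists_params (s : ℝ) (hs0 : 0 ≤ s) (hs1 : s ≤ 1) (j k : ℕ) (hj : 1 ≤ j) (hk : 1 ≤ k)
    (habs : 4 < |(k:ℤ) - 2*(j:ℤ)|) :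
    ∃ m t δ c' : ℝ, |m| ≤ 1 ∧ |t| ≤ 1 ∧ 0 < δ ∧ δ ≤ 1/4 ∧ 0 ≤ c' ∧ c' ≤ 1 ∧
      (∀ τ ξ : ℝ, ((2:ℝ)^(-(k:ℤ)) + (2:ℝ)^(2*(j:ℤ)-(k:ℤ)) * ξ^2) ^ s /
          (τ + (2:ℝ)^(2*(j:ℤ)-(k:ℤ)) * ξ^2) = m * Wf s (t*τ, (ξ, (δ, c')))) ∧
      (∀ τ ξ : ℝ, 1/2 ≤ |τ| → |τ| ≤ 2 → 1/2 ≤ |ξ| → |ξ| ≤ 2 →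
        3/16 ≤ |t*τ + c' * ξ^2|) := by
  set c : ℝ := (2:ℝ)^(2*(j:ℤ)-(k:ℤ)) with hc
  set δ : ℝ := (2:ℝ)^(-(2*(j:ℤ))) with hδ
  have hc0 : 0 < c := zpow_pos (by norm_num) _
  have hδ0 : 0 < δ := zpow_pos (by norm_num) _
  have hδ4 : δ ≤ 1/4 := by
    have h1 : -(2*(j:ℤ)) ≤ -2 := by
      have : (1:ℤ) ≤ (j:ℤ) := by exact_mod_cast hj
      linarith
    calc δ ≤ (2:ℝ)^(-2:ℤ) := zpow_le_zpow_right₀ (by norm_num) h1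
    _ = 1/4 := by norm_num
  have hcδ : c * δ = (2:ℝ)^(-(k:ℤ)) := by
    rw [hc, hδ, ← zpow_add₀ (by norm_num : (2:ℝ) ≠ 0)]
    congr 1
    ring
  have hj1 : (1:ℤ) ≤ (j:ℤ) := by exact_mod_cast hj
  rcases lt_abs.1 habs with hcase | hcase
  · -- k - 2j > 4 : c small
    have hcsmall : c ≤ 1/32 := by
      calc c ≤ (2:ℝ)^(-5:ℤ) := zpow_le_zpow_right₀ (by norm_num) (by linarith)
      _ = 1/32 := by norm_num
    refine ⟨c^s, 1, δ, c, ?_, by simp, hδ0, hδ4, hc0.le, by linarith, ?_, ?_⟩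
    · rw [abs_of_nonneg (Real.rpow_nonneg hc0.le s)]
      exact Real.rpow_le_one hc0.le (by linarith) hs0
    · intro τ ξ
      have h1 : (2:ℝ)^(-(k:ℤ)) + c * ξ^2 = c * (δ + ξ^2) := by rw [← hcδ]; ring
      rw [Wf]
      simp only
      rw [h1, Real.mul_rpow hc0.le (by positivity), one_mul, mul_div_assoc]
    · intro τ ξ hτ1 hτ2 hξ1 hξ2
      have hξ4 : ξ^2 ≤ 4 := by nlinarith [sq_abs ξ, abs_nonneg ξ]
      have hcξ0 : 0 ≤ c * ξ^2 := by positivity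
      have hcξ : c * ξ^2 ≤ 1/8 := by nlinarith
      rcases le_abs.1 hτ1 with h | h
      · refine le_trans ?_ (le_abs_self _)
        nlinarith
      · refine le_trans ?_ (neg_le_abs _)
        nlinarith
  · -- 2j - k > 4 : c large
    have hcbig : (32:ℝ) ≤ c := by
      calc (32:ℝ) = (2:ℝ)^(5:ℤ) := by norm_num
      _ ≤ c := zpow_le_zpow_right₀ (by norm_num) (by linarith)
    have hcinv : c⁻¹ ≤ 1/32 := by
      rw [inv_le_comm₀ hc0 (by norm_num)]
      linarith
    have hcinv0 : 0 < c⁻¹ := inv_pos.2 hc0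
    refine ⟨c^(s-1), c⁻¹, δ, 1, ?_, ?_, hδ0, hδ4, by norm_num, le_refl _, ?_, ?_⟩
    · rw [abs_of_nonneg (Real.rpow_nonneg hc0.le _)]
      exact Real.rpow_le_one_of_one_le_of_nonpos (by linarith) (by linarith)
    · rw [abs_of_nonneg hcinv0.le]; linarith
    · intro τ ξ
      have h1 : (2:ℝ)^(-(k:ℤ)) + c * ξ^2 = c * (δ + ξ^2) := by rw [← hcδ]; ring
      have h2 : c⁻¹*τ + 1*ξ^2 = (τ + c*ξ^2) / c := by
        field_simp
      rw [Wf]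
      simp only
      rw [h1, h2, Real.mul_rpow hc0.le (by positivity), div_div_eq_mul_div]
      have h3 : c^s = c^(s-1)*c := by
        rw [← Real.rpow_add_one hc0.ne' (s-1)]
        norm_num
      rw [h3]
      ring
    · intro τ ξ hτ1 hτ2 hξ1 hξ2
      have hξ4 : 1/4 ≤ ξ^2 := by nlinarith [sq_abs ξ, abs_nonneg ξ]
      have habs2 : |c⁻¹ * τ| ≤ 1/16 := by
        rw [abs_mul, abs_of_nonneg hcinv0.le]
        calc c⁻¹ * |τ| ≤ (1/32) * 2 := by
              apply mul_le_mul hcinv hτ2 (abs_nonneg _) (by norm_num)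
        _ = 1/16 := by norm_num
      have h5 : -(1/16) ≤ c⁻¹ * τ := by
        have := neg_abs_le (c⁻¹ * τ)
        linarith
      refine le_trans ?_ (le_abs_self _)
      nlinarith


lemma choose_le_eight {n i : ℕ} (hn : n ≤ 3) : (n.choose i : ℝ) ≤ 8 := by
  have h1 : n.choose i ≤ 2^n := by
    rcases le_or_gt i n with h | h
    · calc n.choose i ≤ ∑ m ∈ Finset.range (n+1), n.choose m :=
            Finset.single_le_sum (f := fun m => n.choose m) (fun _ _ => Nat.zero_le _)
              (Finset.mem_range.2 (by omega))
      _ = 2^n := Nat.sum_range_choose n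
    · simp [Nat.choose_eq_zero_of_lt h]
  have h2 : (2:ℕ)^n ≤ 8 := by
    calc (2:ℕ)^n ≤ 2^3 := Nat.pow_le_pow_right (by norm_num) hn
    _ = 8 := rfl
  exact_mod_cast le_trans h1 h2

lemma exists_CA {ψ φ : ℝ → ℝ} (hψ : ContDiff ℝ (⊤ : ℕ∞) ψ) (hφ : ContDiff ℝ (⊤ : ℕ∞) φ)
    (hψsupp : ∀ τ : ℝ, ψ τ ≠ 0 → 1/2 ≤ |τ| ∧ |τ| ≤ 2)
    (hφsupp : ∀ ξ : ℝ, φ ξ ≠ 0 → 1/2 ≤ |ξ| ∧ |ξ| ≤ 2) :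
    ∃ CA : ℝ, 0 ≤ CA ∧ ContDiff ℝ (⊤ : ℕ∞) (fun q : E2 => ψ (q 0) * φ (q 1)) ∧
      ∀ i ≤ 3, ∀ p : E2, ‖iteratedFDeriv ℝ i (fun q : E2 => ψ (q 0) * φ (q 1)) p‖ ≤ CA := by
  set A : E2 → ℝ := fun q => ψ (q 0) * φ (q 1) with hA
  have h1c : ContDiff ℝ (⊤ : ℕ∞) (fun q : E2 => ψ (q 0)) :=
    hψ.comp (contDiff_piLp_apply 2)
  have h2c : ContDiff ℝ (⊤ : ℕ∞) (fun q : E2 => φ (q 1)) :=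
    hφ.comp (contDiff_piLp_apply 2)
  have hAc : ContDiff ℝ (⊤ : ℕ∞) A := h1c.mul h2c
  have hsupp : Function.support A ⊆ Rs := by
    intro q hq
    rcases mul_ne_zero_iff.1 hq with ⟨h1, h2⟩
    exact ⟨(hψsupp _ h1).1, (hψsupp _ h1).2, (hφsupp _ h2).1, (hφsupp _ h2).2⟩
  have hAcs : HasCompactSupport A := by
    apply (isCompact_closedBall (0:E2) 3).of_isClosed_subset (isClosed_tsupport _)
    exact (closure_minimal hsupp isClosed_Rs).trans Rs_subset_ball
  have hb : ∀ i : ℕ, ∃ Ci : ℝ, ∀ p : E2, ‖iteratedFDeriv ℝ i A p‖ ≤ Ci := by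
    intro i
    exact (hAc.continuous_iteratedFDeriv (m := i) (by exact_mod_cast le_top)).bounded_above_of_compact_support
      (hAcs.iteratedFDeriv i)
  obtain ⟨C0, h0⟩ := hb 0
  obtain ⟨C1, h1⟩ := hb 1
  obtain ⟨C2, h2⟩ := hb 2
  obtain ⟨C3, h3⟩ := hb 3
  refine ⟨max 0 (max (max C0 C1) (max C2 C3)), le_max_left _ _, hAc, ?_⟩
  intro i hi p
  interval_cases i
  · exact (h0 p).trans (le_max_of_le_right (le_max_of_le_left (le_max_left _ _)))
  · exact (h1 p).trans (le_max_of_le_right (le_max_of_le_left (le_max_right _ _)))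
  · exact (h2 p).trans (le_max_of_le_right (le_max_of_le_right (le_max_left _ _)))
  · exact (h3 p).trans (le_max_of_le_right (le_max_of_le_right (le_max_right _ _)))

set_option maxHeartbeats 2000000 in
lemma main_bound {ψ φ : ℝ → ℝ} (hψ : ContDiff ℝ (⊤ : ℕ∞) ψ) (hφ : ContDiff ℝ (⊤ : ℕ∞) φ)
    (hψsupp : ∀ τ : ℝ, ψ τ ≠ 0 → 1/2 ≤ |τ| ∧ |τ| ≤ 2)
    (hφsupp : ∀ ξ : ℝ, φ ξ ≠ 0 → 1/2 ≤ |ξ| ∧ |ξ| ≤ 2)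
    (s : ℝ) (hs0 : 0 ≤ s) (hs1 : s ≤ 1) :
    ∃ C : ℝ, 1 ≤ C ∧ ∀ j k : ℕ, 1 ≤ j → 1 ≤ k → 4 < |(k:ℤ) - 2*(j:ℤ)| →
      ContDiff ℝ 3 (Fjk ψ φ s j k) ∧
      ∀ n ≤ 3, ∀ p : E2, ‖iteratedFDeriv ℝ n (Fjk ψ φ s j k) p‖ ≤ C := by
  obtain ⟨CA, hCA0, hAc, hCA⟩ := exists_CA hψ hφ hψsupp hφsupp
  obtain ⟨CW, hCW0, hCW⟩ := exists_CW s
  set A : E2 → ℝ := fun q => ψ (q 0) * φ (q 1) with hA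
  refine ⟨1536*CA*CW + 1, by nlinarith, ?_⟩
  intro j k hj hk habs
  obtain ⟨m, t, δ, c', hm1, ht1, hδ0, hδ4, hc0', hc1', hid, hlow⟩ :=
    exists_params s hs0 hs1 j k hj hk habs
  set L : E2 →L[ℝ] Y4 := (t • EuclideanSpace.proj (0:Fin 2)).prod
      ((EuclideanSpace.proj (1:Fin 2)).prod
        ((0 : E2 →L[ℝ] ℝ).prod (0 : E2 →L[ℝ] ℝ))) with hL
  set v0 : Y4 := (0, (0, (δ, c'))) with hv0
  set g : E2 → Y4 := fun q => (t * q 0, (q 1, (δ, c'))) with hg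
  have hgL : g = fun q => L q + v0 := by
    funext q
    simp [hg, hL, hv0, Prod.ext_iff]
  have hfder : fderiv ℝ g = fun _ => L := by
    funext p
    rw [hgL, fderiv_add_const, ContinuousLinearMap.fderiv]
  have hgC : ∀ n : ℕ, ContDiff ℝ n g := by
    intro n
    rw [hgL]
    exact L.contDiff.add contDiff_const
  have hLnorm : ‖L‖ ≤ 2 := by
    apply ContinuousLinearMap.opNorm_le_bound _ (by norm_num)
    intro q
    have h0 := abs_coord_le q 0
    have h1 := abs_coord_le q 1
    have hLq : L q = (t * q 0, (q 1, ((0:ℝ), (0:ℝ)))) := by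
      simp [hL]
    rw [hLq, Prod.norm_def, Prod.norm_def, Prod.norm_def]
    simp only [Real.norm_eq_abs, abs_zero]
    have htq : |t * q 0| ≤ ‖q‖ := by
      rw [abs_mul]
      calc |t| * |q 0| ≤ 1 * ‖q‖ :=
        mul_le_mul ht1 h0 (abs_nonneg _) zero_le_one
      _ = ‖q‖ := one_mul _
    have hnq : (0:ℝ) ≤ ‖q‖ := norm_nonneg q
    refine max_le (by linarith) (max_le (by linarith) (max_le (by linarith) (by linarith)))
  have hiFDg : ∀ i : ℕ, 1 ≤ i → ∀ p : E2, ‖iteratedFDeriv ℝ i g p‖ ≤ 2 ^ i := by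
    intro i hi p
    match i, hi with
    | 1, _ =>
      have h1 : ‖iteratedFDeriv ℝ 1 g p‖ = ‖fderiv ℝ g p‖ := by
        rw [← norm_iteratedFDeriv_fderiv (n := 0), norm_iteratedFDeriv_zero]
      rw [h1, hfder]
      calc ‖L‖ ≤ 2 := hLnorm
      _ ≤ 2^1 := by norm_num
    | (i+2), _ =>
      have h2 : ‖iteratedFDeriv ℝ (i+2) g p‖ = ‖iteratedFDeriv ℝ (i+1) (fderiv ℝ g) p‖ :=
        (norm_iteratedFDeriv_fderiv).symm
      rw [h2, hfder, iteratedFDeriv_const_of_ne (Nat.succ_ne_zero i)]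
      simp only [Pi.zero_apply, norm_zero]
      positivity
  set U : Set E2 := g ⁻¹' Om with hU
  have hUopen : IsOpen U := isOpen_Om.preimage (hgC 1).continuous
  have hUu : UniqueDiffOn ℝ U := hUopen.uniqueDiffOn
  have hgS : ∀ q ∈ Rs, g q ∈ Sc := by
    rintro q ⟨hq1, hq2, hq3, hq4⟩
    refine ⟨?_, hq3, hq4, hδ0.le, by linarith, hc0', hc1', ?_⟩
    · calc |t * q 0| = |t| * |q 0| := abs_mul _ _
      _ ≤ 1 * 2 := mul_le_mul ht1 hq2 (abs_nonneg _) zero_le_one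
      _ = 2 := one_mul 2
    · exact hlow (q 0) (q 1) hq1 hq2 hq3 hq4
  have hRU : Rs ⊆ U := fun q hq => Sc_subset_Om (hgS q hq)
  have hmapsU : Set.MapsTo g U Om := fun x hx => hx
  set B : E2 → ℝ := fun q => m * (Wf s ∘ g) q with hB
  have hFid : ∀ q : E2, Fjk ψ φ s j k q = Complex.ofRealLI (A q * B q) := by
    intro q
    have hval : Complex.ofRealLI (A q * B q) = ((A q * B q : ℝ) : ℂ) := rfl
    rw [hval]
    simp only [Fjk, hA, hB, Function.comp_apply, hg]
    rw [hid (q 0) (q 1)]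
    push_cast
    ring
  have hFfun : Fjk ψ φ s j k = (⇑Complex.ofRealLI) ∘ (fun q => A q * B q) :=
    funext fun q => hFid q
  have hWg : ContDiffOn ℝ 3 (Wf s ∘ g) U :=
    (contDiffOn_Wf s 3).comp (hgC 3).contDiffOn (fun x hx => hx)
  have hBc : ContDiffOn ℝ 3 B U := contDiffOn_const.mul hWg
  have hAc3 : ContDiff ℝ 3 A := hAc.of_le (WithTop.coe_le_coe.2 le_top)
  have hr : ContDiffOn ℝ 3 (fun q => A q * B q) U := hAc3.contDiffOn.mul hBc
  have hFU : ContDiffOn ℝ 3 (Fjk ψ φ s j k) U := by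
    rw [hFfun]
    exact Complex.ofRealLI.toContinuousLinearMap.contDiff.comp_contDiffOn hr
  have hev0 : ∀ p : E2, p ∉ Rs → ∀ᶠ y in 𝓝 p, Fjk ψ φ s j k y = 0 := by
    intro p hpR
    filter_upwards [isClosed_Rs.isOpen_compl.mem_nhds hpR] with y hy
    exact Fjk_eq_zero hψsupp hφsupp s j k hy
  have hsm : ContDiff ℝ 3 (Fjk ψ φ s j k) := by
    rw [contDiff_iff_contDiffAt]
    intro p
    by_cases hp : p ∈ U
    · exact hFU.contDiffAt (hUopen.mem_nhds hp)
    · exact ContDiffAt.congr_of_eventuallyEq contDiffAt_const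
        (hev0 p (fun h => hp (hRU h)))
  refine ⟨hsm, ?_⟩
  intro n hn p
  by_cases hpR : p ∈ Rs
  swap
  · rw [iFD_zero_of_eventually (hev0 p hpR) n]
    simp only [norm_zero]
    nlinarith
  · have hp : p ∈ U := hRU hpR
    have hcast : (n : WithTop ℕ∞) ≤ 3 := by exact_mod_cast hn
    have e1 : ‖iteratedFDeriv ℝ n (Fjk ψ φ s j k) p‖ =
        ‖iteratedFDerivWithin ℝ n (Fjk ψ φ s j k) U p‖ :=
      (congrArg norm (iteratedFDerivWithin_of_isOpen n hUopen hp)).symm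
    have e2 : ‖iteratedFDerivWithin ℝ n (Fjk ψ φ s j k) U p‖ =
        ‖iteratedFDerivWithin ℝ n (fun q => A q * B q) U p‖ := by
      rw [hFfun]
      exact Complex.ofRealLI.norm_iteratedFDerivWithin_comp_left (hr p hp) hUu hp hcast
    have hmul := norm_iteratedFDerivWithin_mul_le (f := A) (g := B)
      hAc3.contDiffOn hBc hUu hp hcast
    have hterm : ∀ i ∈ Finset.range (n+1),
        (n.choose i : ℝ) * ‖iteratedFDerivWithin ℝ i A U p‖ *
        ‖iteratedFDerivWithin ℝ (n-i) B U p‖ ≤ 8 * (CA * (48 * CW)) := by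
      intro i hi
      rw [Finset.mem_range] at hi
      have hi3 : i ≤ 3 := by omega
      have hni3 : n - i ≤ 3 := by omega
      have hA_bd : ‖iteratedFDerivWithin ℝ i A U p‖ ≤ CA := by
        rw [iteratedFDerivWithin_of_isOpen i hUopen hp]
        exact hCA i hi3 p
      have hB_bd : ‖iteratedFDerivWithin ℝ (n-i) B U p‖ ≤ 48 * CW := by
        have hsmul : B = m • (Wf s ∘ g) := rfl
        rw [hsmul, iteratedFDerivWithin_const_smul_apply
          ((hWg.of_le (show ((n-i : ℕ) : WithTop ℕ∞) ≤ 3 by exact_mod_cast hni3)) p hp) hUu hp, norm_smul]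
        have hcomp_bd : ‖iteratedFDerivWithin ℝ (n-i) (Wf s ∘ g) U p‖ ≤
            (Nat.factorial (n-i) : ℝ) * CW * 2^(n-i) := by
          apply norm_iteratedFDerivWithin_comp_le (contDiffOn_Wf s 3) (hgC 3).contDiffOn
            (by exact_mod_cast hni3) isOpen_Om.uniqueDiffOn hUu hmapsU hp
          · intro i' hi'
            exact hCW i' (by omega) _ (hgS p hpR)
          · intro i' h1i' hi'n
            rw [iteratedFDerivWithin_of_isOpen i' hUopen hp]
            exact hiFDg i' h1i' p
        have hfact : ((Nat.factorial (n-i)) : ℝ) ≤ 6 := by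
          have : Nat.factorial (n-i) ≤ Nat.factorial 3 := Nat.factorial_le hni3
          exact_mod_cast this.trans (by decide)
        have hp2 : (2:ℝ)^(n-i) ≤ 8 := by
          calc (2:ℝ)^(n-i) ≤ 2^3 := pow_le_pow_right₀ (by norm_num) hni3
          _ = 8 := by norm_num
        have hm' : ‖m‖ ≤ 1 := by rwa [Real.norm_eq_abs]
        have hfacn : (0:ℝ) ≤ ((Nat.factorial (n-i)) : ℝ) := by positivity
        have hp2n : (0:ℝ) ≤ (2:ℝ)^(n-i) := by positivity
        calc ‖m‖ * ‖iteratedFDerivWithin ℝ (n-i) (Wf s ∘ g) U p‖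
            ≤ 1 * ((Nat.factorial (n-i) : ℝ) * CW * 2^(n-i)) := by
              apply mul_le_mul hm' hcomp_bd (norm_nonneg _) zero_le_one
        _ = (Nat.factorial (n-i) : ℝ) * CW * 2^(n-i) := one_mul _
        _ ≤ 48 * CW := by
          have ha1 : (Nat.factorial (n-i) : ℝ) * CW ≤ 6 * CW :=
            mul_le_mul_of_nonneg_right hfact hCW0
          have ha2 : (Nat.factorial (n-i) : ℝ) * CW * 2^(n-i) ≤ 6 * CW * 2^(n-i) :=
            mul_le_mul_of_nonneg_right ha1 hp2n
          have ha3 : 6 * CW * 2^(n-i) ≤ 6 * CW * 8 :=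
            mul_le_mul_of_nonneg_left hp2 (by positivity)
          linarith
      have hchoose : (n.choose i : ℝ) ≤ 8 := choose_le_eight hn
      have hAnn : (0:ℝ) ≤ ‖iteratedFDerivWithin ℝ i A U p‖ := norm_nonneg _
      have hBnn : (0:ℝ) ≤ ‖iteratedFDerivWithin ℝ (n-i) B U p‖ := norm_nonneg _
      have hcnn : (0:ℝ) ≤ (n.choose i : ℝ) := Nat.cast_nonneg _
      calc (n.choose i : ℝ) * ‖iteratedFDerivWithin ℝ i A U p‖ *
          ‖iteratedFDerivWithin ℝ (n-i) B U p‖ ≤ (8 * CA) * (48 * CW) := by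
            apply mul_le_mul _ hB_bd hBnn (by nlinarith)
            exact mul_le_mul hchoose hA_bd hAnn (by norm_num)
      _ = 8 * (CA * (48 * CW)) := by ring
    have hsum : ∑ i ∈ Finset.range (n+1),
        (n.choose i : ℝ) * ‖iteratedFDerivWithin ℝ i A U p‖ *
        ‖iteratedFDerivWithin ℝ (n-i) B U p‖ ≤ (n+1) * (8 * (CA * (48 * CW))) := by
      have := Finset.sum_le_card_nsmul (Finset.range (n+1)) _ _ hterm
      rw [Finset.card_range] at this
      calc _ ≤ (n+1) • (8 * (CA * (48 * CW))) := this
      _ = ((n+1 : ℕ) : ℝ) * (8 * (CA * (48 * CW))) := nsmul_eq_mul _ _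
      _ = (n+1) * (8 * (CA * (48 * CW))) := by push_cast; ring
    rw [e1, e2]
    refine hmul.trans (hsum.trans ?_)
    have hn4 : ((n:ℝ)+1) ≤ 4 := by
      have : (n:ℝ) ≤ 3 := by exact_mod_cast hn
      linarith
    have hB8 : (0:ℝ) ≤ 8 * (CA * (48 * CW)) := by positivity
    have hfin := mul_le_mul_of_nonneg_right hn4 hB8
    linarith

end Stmt8Aux

set_option maxHeartbeats 2000000 in
theorem stmt8 (ψ φ : ℝ → ℝ) (hψ : ContDiff ℝ (⊤ : ℕ∞) ψ) (hφ : ContDiff ℝ (⊤ : ℕ∞) φ)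
    (hψcs : HasCompactSupport ψ) (hφcs : HasCompactSupport φ)
    (hψsupp : ∀ τ : ℝ, ψ τ ≠ 0 → 1/2 ≤ |τ| ∧ |τ| ≤ 2)
    (hφsupp : ∀ ξ : ℝ, φ ξ ≠ 0 → 1/2 ≤ |ξ| ∧ |ξ| ≤ 2)
    (s : ℝ) (hs0 : 0 ≤ s) (hs1 : s ≤ 1) :
    ∃ C > 0, ∃ C' > 0, ∀ j k : ℕ, 1 ≤ j → 1 ≤ k → 4 < |(k:ℤ) - 2*(j:ℤ)| →
      (∀ n ≤ 3, ∀ p : EuclideanSpace ℝ (Fin 2),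
        ‖iteratedFDeriv ℝ n (Fjk ψ φ s j k) p‖ ≤ C) ∧
      (∫ p : EuclideanSpace ℝ (Fin 2),
          ‖FourierTransformInv.fourierInv (Fjk ψ φ s j k) p‖) ≤ C' := by
  classical
  obtain ⟨C, hC1, hC⟩ := Stmt8Aux.main_bound hψ hφ hψsupp hφsupp s hs0 hs1
  have hC0 : (0:ℝ) < C := lt_of_lt_of_le one_pos hC1
  set V : ℝ := (volume (Metric.closedBall (0 : Stmt8Aux.E2) 3)).toReal with hV
  have hV0 : 0 ≤ V := ENNReal.toReal_nonneg
  set Ival : ℝ := ∫ w : Stmt8Aux.E2, ((1:ℝ) + ‖w‖) ^ (-(3:ℝ)) with hIval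
  have hIval0 : 0 ≤ Ival :=
    integral_nonneg fun w => Real.rpow_nonneg (by positivity) _
  have hIneg : Integrable (fun w : Stmt8Aux.E2 => ((1:ℝ) + ‖w‖) ^ (-(3:ℝ))) := by
    apply integrable_one_add_norm
    rw [finrank_euclideanSpace_fin]
    norm_num
  refine ⟨C, hC0, 144 * (C * V) * Ival + 1, by positivity, ?_⟩
  intro j k hj hk habs
  obtain ⟨hsm, hbd⟩ := hC j k hj hk habs
  refine ⟨hbd, ?_⟩
  set f : Stmt8Aux.E2 → ℂ := Fjk ψ φ s j k with hfdef
  have hzero : ∀ v : Stmt8Aux.E2, v ∉ Metric.closedBall (0 : Stmt8Aux.E2) 3 → ∀ n : ℕ,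
      iteratedFDeriv ℝ n f v = 0 := by
    intro v hv n
    apply Stmt8Aux.iFD_zero_of_eventually _ n
    have hvR : v ∉ Stmt8Aux.Rs := fun h => hv (Stmt8Aux.Rs_subset_ball h)
    filter_upwards [Stmt8Aux.isClosed_Rs.isOpen_compl.mem_nhds hvR] with y hy
    exact Stmt8Aux.Fjk_eq_zero hψsupp hφsupp s j k hy
  have hsupp : HasCompactSupport f := by
    apply HasCompactSupport.intro (isCompact_closedBall (0 : Stmt8Aux.E2) 3)
    intro q hq
    exact Stmt8Aux.Fjk_eq_zero hψsupp hφsupp s j k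
      (fun h => hq (Stmt8Aux.Rs_subset_ball h))
  have hint : ∀ n : ℕ, n ≤ 3 → Integrable (iteratedFDeriv ℝ n f) := by
    intro n hn
    exact ((hsm.continuous_iteratedFDeriv (by exact_mod_cast hn)).integrable_of_hasCompactSupport
      (hsupp.iteratedFDeriv n))
  have hIbound : ∀ n : ℕ, n ≤ 3 → (∫ v, ‖iteratedFDeriv ℝ n f v‖) ≤ C * V := by
    intro n hn
    have hptw : ∀ v : Stmt8Aux.E2, ‖iteratedFDeriv ℝ n f v‖ ≤
        (Metric.closedBall (0 : Stmt8Aux.E2) 3).indicator (fun _ => C) v := by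
      intro v
      by_cases hv : v ∈ Metric.closedBall (0 : Stmt8Aux.E2) 3
      · rw [Set.indicator_of_mem hv]
        exact hbd n hn v
      · rw [Set.indicator_of_notMem hv, hzero v hv n]
        simp
    calc (∫ v, ‖iteratedFDeriv ℝ n f v‖) ≤
        ∫ v, (Metric.closedBall (0 : Stmt8Aux.E2) 3).indicator (fun _ => C) v := by
          apply integral_mono_of_nonneg (Filter.Eventually.of_forall fun v => norm_nonneg _) _
            (Filter.Eventually.of_forall hptw)
          exact ((integrableOn_const (measure_closedBall_lt_top).ne).integrable_indicator
            measurableSet_closedBall)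
    _ = (volume (Metric.closedBall (0 : Stmt8Aux.E2) 3)).toReal • C :=
        integral_indicator_const C measurableSet_closedBall
    _ = C * V := by rw [smul_eq_mul, hV, mul_comm]
  have h'f : ∀ (k' n : ℕ), (k':ℕ∞) ≤ 0 → (n:ℕ∞) ≤ 3 →
      Integrable (fun v : Stmt8Aux.E2 => ‖v‖^k' * ‖iteratedFDeriv ℝ n f v‖) := by
    intro k' n hk' hn
    have hk0 : k' = 0 := by
      have h00 : (k' : ℕ∞) = 0 := le_antisymm hk' zero_le
      exact_mod_cast h00
    subst hk0
    simpa using (hint n (by exact_mod_cast hn)).norm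
  have hsum : ∑ q ∈ Finset.range (0+1) ×ˢ Finset.range (3+1),
      (∫ v : Stmt8Aux.E2, ‖v‖ ^ q.1 * ‖iteratedFDeriv ℝ q.2 f v‖) ≤ 4 * (C * V) := by
    have hcard : (Finset.range (0+1) ×ˢ Finset.range (3+1)).card = 4 := by
      simp [Finset.card_product]
    have hmem : ∀ q ∈ Finset.range (0+1) ×ˢ Finset.range (3+1),
        (∫ v : Stmt8Aux.E2, ‖v‖ ^ q.1 * ‖iteratedFDeriv ℝ q.2 f v‖) ≤ C * V := by
      rintro ⟨a, b⟩ hab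
      simp only [Finset.mem_product, Finset.mem_range] at hab
      have ha : a = 0 := by omega
      subst ha
      simpa using hIbound b (by omega)
    have := Finset.sum_le_card_nsmul (Finset.range (0+1) ×ˢ Finset.range (3+1))
      (fun q => ∫ v : Stmt8Aux.E2, ‖v‖ ^ q.1 * ‖iteratedFDeriv ℝ q.2 f v‖) (C*V) hmem
    rw [hcard] at this
    calc ∑ q ∈ Finset.range (0+1) ×ˢ Finset.range (3+1),
        (∫ v : Stmt8Aux.E2, ‖v‖ ^ q.1 * ‖iteratedFDeriv ℝ q.2 f v‖) ≤ (4:ℕ) • (C*V) := this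
    _ = 4 * (C * V) := by rw [nsmul_eq_mul]; norm_num
  have h𝓕0 : ∀ w : Stmt8Aux.E2, ‖FourierTransform.fourier f w‖ ≤ C * V := by
    intro w
    refine (VectorFourier.norm_fourierIntegral_le_integral_norm _ _ _ _ _).trans ?_
    have := hIbound 0 (by norm_num)
    simpa [norm_iteratedFDeriv_zero] using this
  have hsm' : ContDiff ℝ ((3:ℕ∞) : WithTop ℕ∞) f := by exact_mod_cast hsm
  have h𝓕3 : ∀ w : Stmt8Aux.E2, ‖w‖^3 * ‖FourierTransform.fourier f w‖ ≤ 8 * (4 * (C * V)) := by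
    intro w
    have hmain := Real.pow_mul_norm_iteratedFDeriv_fourier_le (K := 0) (N := 3)
      hsm' h'f (k := 0) (n := 3) (le_refl _) (le_refl _) w
    rw [norm_iteratedFDeriv_zero] at hmain
    refine hmain.trans ?_
    have h28 : ((2:ℝ) * (0:ℕ) + 2) ^ 3 = 8 := by norm_num
    calc (2 * Real.pi) ^ 0 * (2 * (0:ℕ) + 2) ^ 3 *
        ∑ q ∈ Finset.range (0+1) ×ˢ Finset.range (3+1),
          (∫ v : Stmt8Aux.E2, ‖v‖ ^ q.1 * ‖iteratedFDeriv ℝ q.2 f v‖)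
        = 8 * ∑ q ∈ Finset.range (0+1) ×ˢ Finset.range (3+1),
          (∫ v : Stmt8Aux.E2, ‖v‖ ^ q.1 * ‖iteratedFDeriv ℝ q.2 f v‖) := by
          rw [pow_zero, one_mul, h28]
    _ ≤ 8 * (4 * (C * V)) := by
          have h8 : (0:ℝ) ≤ 8 := by norm_num
          exact mul_le_mul_of_nonneg_left hsum h8
  have hptw2 : ∀ w : Stmt8Aux.E2, ‖FourierTransformInv.fourierInv f w‖ ≤
      144 * (C * V) * ((1:ℝ) + ‖w‖) ^ (-(3:ℝ)) := by
    intro w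
    rw [Real.fourierInv_eq_fourier_neg]
    have hX0 := h𝓕0 (-w)
    have hX3 := h𝓕3 (-w)
    rw [norm_neg] at hX3
    set X := ‖FourierTransform.fourier f (-w)‖ with hX
    set u := ‖w‖ with hu
    have hu0 : 0 ≤ u := norm_nonneg w
    have hXnn : 0 ≤ X := norm_nonneg _
    have hcube : (1+u)^3 ≤ 4*(1+u^3) := by nlinarith [sq_nonneg (1-u), sq_nonneg u]
    have h4 : (1+u)^3 * X ≤ 144 * (C * V) := by
      have h5 : (1+u)^3 * X ≤ 4*(1+u^3)*X := mul_le_mul_of_nonneg_right hcube hXnn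
      have h6 : (4*(1+u^3))*X = 4*X + 4*(u^3*X) := by ring
      have hCV : 0 ≤ C * V := by positivity
      nlinarith
    have hpos : (0:ℝ) < (1+u)^3 := by positivity
    have hrw : ((1:ℝ)+u) ^ (-(3:ℝ)) = ((1+u)^(3:ℕ))⁻¹ := by
      rw [show (-(3:ℝ)) = -((3:ℕ):ℝ) by norm_num, Real.rpow_neg (by positivity),
        Real.rpow_natCast]
    rw [hrw, ← div_eq_mul_inv, le_div_iff₀ hpos]
    nlinarith
  calc (∫ p : Stmt8Aux.E2, ‖FourierTransformInv.fourierInv f p‖) ≤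
      ∫ p : Stmt8Aux.E2, 144 * (C * V) * ((1:ℝ) + ‖p‖) ^ (-(3:ℝ)) :=
        integral_mono_of_nonneg (Filter.Eventually.of_forall fun p => norm_nonneg _)
          (hIneg.const_mul _) (Filter.Eventually.of_forall hptw2)
  _ = 144 * (C * V) * Ival := by rw [hIval, integral_const_mul]
  _ ≤ 144 * (C * V) * Ival + 1 := by linarith
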